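/- For every odd m ≥ 1, the Lucas polynomial factors as L_m(x) = x · ∏_{d ∣ m, d > 1} φ_d(x²), an identity of polynomials in ℝ[x]. -/

import Mathlib

open Polynomial

/-- The Lucas polynomials: `L 0 = 2`, `L 1 = X`, `L (n+2) = X * L (n+1) - L n`. -/
noncomputable def lucasPoly : ℕ → Polynomial ℤ
  | 0 => 2
  | 1 => X
  | n + 2 => X * lucasPoly (n + 1) - lucasPoly n

/-- The zpread polynomials `Z n = 2 - L n (2 - X)`. -/
noncomputable def zpread (n : ℕ) : Polynomial ℤ := 2 - (lucasPoly n).comp (2 - X)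
/-- `phiPoly n` : for `n ≥ 3`, the polynomial `∏_{0 < k < n/2, gcd(k,n)=1} (X - 4 sin²(kπ/n))` in `ℝ[X]`,
with `phiPoly 1 = X` and `phiPoly 2 = X - 4`. -/
noncomputable def phiPoly : ℕ → Polynomial ℝ
  | 1 => X
  | 2 => X - 4
  | n => ∏ k ∈ Finset.filter (fun k => 0 < k ∧ 2 * k < n ∧ Nat.gcd k n = 1) (Finset.range n),
      (X - C (4 * (Real.sin ((k : ℝ) * Real.pi / (n : ℝ)))^2))

lemma lucasPoly_add_two (n : ℕ) : lucasPoly (n + 2) = X * lucasPoly (n + 1) - lucasPoly n := rfl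

lemma phiPoly_of_three_le {n : ℕ} (h : 3 ≤ n) :
    phiPoly n = ∏ k ∈ Finset.filter (fun k => 0 < k ∧ 2 * k < n ∧ Nat.gcd k n = 1) (Finset.range n),
      (X - C (4 * (Real.sin ((k : ℝ) * Real.pi / (n : ℝ)))^2)) := by
  obtain ⟨j, rfl⟩ : ∃ j, n = j + 3 := ⟨n - 3, by omega⟩
  rw [phiPoly] <;> omega

/-- `lucasPoly (n+1)` is monic of degree `n+1`. -/
lemma lucasPoly_monic_natDegree :
    ∀ n : ℕ, (lucasPoly (n + 1)).Monic ∧ (lucasPoly (n + 1)).natDegree = n + 1 := by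
  intro n
  induction n using Nat.strong_induction_on with
  | _ n ih =>
    match n with
    | 0 => exact ⟨monic_X, natDegree_X⟩
    | 1 =>
      have h2 : lucasPoly 2 = X ^ 2 - C 2 := by
        rw [lucasPoly_add_two]; simp [lucasPoly]; ring
      rw [h2]
      exact ⟨monic_X_pow_sub_C 2 two_ne_zero, natDegree_X_pow_sub_C⟩
    | (k + 2) =>
      have ih1 := ih (k + 1) (by omega)
      have ih0 := ih k (by omega)
      rw [lucasPoly_add_two]
      have hmul : (X * lucasPoly (k + 2)).Monic := monic_X.mul ih1.1
      have hmd : (X * lucasPoly (k + 2)).natDegree = k + 3 := by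
        rw [monic_X.natDegree_mul ih1.1, natDegree_X, ih1.2]; omega
      have hlt : (lucasPoly (k + 1)).natDegree < (X * lucasPoly (k + 2)).natDegree := by
        rw [hmd, ih0.2]; omega
      have hltd : (lucasPoly (k + 1)).degree < (X * lucasPoly (k + 2)).degree :=
        degree_lt_degree hlt
      refine ⟨hmul.sub_of_left hltd, ?_⟩
      rw [natDegree_sub_eq_left_of_natDegree_lt hlt, hmd]

/-- Evaluation of the Lucas polynomial at `2 cos θ`. -/
lemma lucasPoly_eval_two_cos :
    ∀ (n : ℕ) (θ : ℝ), ((lucasPoly n).map (Int.castRingHom ℝ)).eval (2 * Real.cos θ)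
      = 2 * Real.cos (n * θ) := by
  intro n
  induction n using Nat.strong_induction_on with
  | _ n ih =>
    match n with
    | 0 => intro θ; simp [lucasPoly]
    | 1 => intro θ; simp [lucasPoly]
    | (k + 2) =>
      intro θ
      have h1 := ih (k + 1) (by omega) θ
      have h0 := ih k (by omega) θ
      rw [lucasPoly_add_two]
      have key : Real.cos (((k : ℝ) + 2) * θ)
          = 2 * Real.cos θ * Real.cos (((k : ℝ) + 1) * θ) - Real.cos ((k : ℝ) * θ) := by
        rw [show ((k : ℝ) + 2) * θ = ((k : ℝ) + 1) * θ + θ by ring,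
            show (k : ℝ) * θ = ((k : ℝ) + 1) * θ - θ by ring,
            Real.cos_add, Real.cos_sub]
        ring
      push_cast
      simp only [Polynomial.map_sub, Polynomial.map_mul, Polynomial.map_X, eval_sub, eval_mul,
        eval_X]
      push_cast at h1 h0
      rw [h1, h0, key]
      ring

/-- If `m * θ` is an odd multiple of `π/2` then `2 cos θ` is a root of `lucasPoly m` over `ℝ`. -/
lemma lucasPoly_root (m : ℕ) (θ : ℝ) (j : ℤ)
    (h : (m : ℝ) * θ = (2 * (j : ℝ) + 1) * (Real.pi / 2)) :
    ((lucasPoly m).map (Int.castRingHom ℝ)).eval (2 * Real.cos θ) = 0 := by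
  rw [lucasPoly_eval_two_cos m θ, h]
  have : (2 * (j : ℝ) + 1) * (Real.pi / 2) = (j : ℝ) * Real.pi + Real.pi / 2 := by ring
  rw [this, Real.cos_add, Real.cos_pi_div_two, Real.sin_pi_div_two, Real.sin_int_mul_pi]
  ring

/-- For odd `d ≥ 3`, twice the cardinality of `{k : 0 < k, 2k < d, gcd(k,d)=1}` is `φ(d)`. -/
lemma two_mul_card_eq_totient {d : ℕ} (hd : 3 ≤ d) (hodd : Odd d) :
    2 * ((Finset.range d).filter (fun k => 0 < k ∧ 2 * k < d ∧ Nat.gcd k d = 1)).card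
      = Nat.totient d := by
  classical
  have hflip : ∀ k, 0 < k → k < d → d.Coprime k → d.Coprime (d - k) := by
    intro k hk0 hkd hg
    have h1 : Nat.gcd (d - k) d ∣ d := Nat.gcd_dvd_right _ _
    have h2 : Nat.gcd (d - k) d ∣ d - k := Nat.gcd_dvd_left _ _
    have h3 : Nat.gcd (d - k) d ∣ k := by
      have := Nat.dvd_sub h1 h2
      rwa [Nat.sub_sub_self (Nat.le_of_lt hkd)] at this
    have h4 : Nat.gcd (d - k) d ∣ Nat.gcd d k := Nat.dvd_gcd h1 h3
    have h5 : Nat.gcd (d - k) d = 1 := Nat.dvd_one.mp (by rwa [hg] at h4)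
    exact Nat.coprime_comm.mp h5
  have hpos : ∀ k, k < d → d.Coprime k → 0 < k := by
    intro k hkd hg
    rcases Nat.eq_zero_or_pos k with rfl | h
    · have := Nat.coprime_zero_right d |>.mp hg; omega
    · exact h
  have hodd2 : d % 2 = 1 := Nat.odd_iff.mp hodd
  set A : Finset ℕ := (Finset.range d).filter d.Coprime with hA
  have hcardA : A.card = Nat.totient d := rfl
  have hsplit := Finset.card_filter_add_card_filter_not
    (s := A) (p := fun k => 2 * k < d)
  have hBeq : (Finset.range d).filter (fun k => 0 < k ∧ 2 * k < d ∧ Nat.gcd k d = 1)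
      = A.filter (fun k => 2 * k < d) := by
    ext k
    simp only [hA, Finset.mem_filter, Finset.mem_range]
    constructor
    · rintro ⟨hk, _, h2, hg⟩
      exact ⟨⟨hk, Nat.coprime_comm.mp hg⟩, h2⟩
    · rintro ⟨⟨hk, hg⟩, h2⟩
      exact ⟨hk, hpos k hk hg, h2, Nat.coprime_comm.mp hg⟩
  have hbij : (A.filter (fun k => ¬ 2 * k < d)).card = (A.filter (fun k => 2 * k < d)).card := by
    apply Finset.card_bij' (fun k _ => d - k) (fun k _ => d - k)
    · intro k hk
      simp only [hA, Finset.mem_filter, Finset.mem_range] at hk ⊢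
      obtain ⟨⟨hkd, hg⟩, h2⟩ := hk
      have hk0 : 0 < k := hpos k hkd hg
      exact ⟨⟨by omega, hflip k hk0 hkd hg⟩, by omega⟩
    · intro k hk
      simp only [hA, Finset.mem_filter, Finset.mem_range] at hk ⊢
      obtain ⟨⟨hkd, hg⟩, h2⟩ := hk
      have hk0 : 0 < k := hpos k hkd hg
      exact ⟨⟨by omega, hflip k hk0 hkd hg⟩, by omega⟩
    · intro k hk
      simp only [hA, Finset.mem_filter, Finset.mem_range] at hk
      omega
    · intro k hk
      simp only [hA, Finset.mem_filter, Finset.mem_range] at hk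
      omega
  rw [hBeq, ← hcardA, ← hsplit, hbij]
  ring


lemma multiset_pairwise_of_nodup {α : Type*} {r : α → α → Prop} {s : Multiset α}
    (h : s.Nodup) (H : ∀ a ∈ s, ∀ b ∈ s, a ≠ b → r a b) : s.Pairwise r := by
  induction s using Quotient.inductionOn with
  | _ l =>
    refine ⟨l, rfl, ?_⟩
    have hl : l.Pairwise (· ≠ ·) := h
    exact List.Pairwise.imp_of_mem (fun ha hb hne => H _ ha _ hb hne) hl

lemma angle_mem {k d : ℕ} (hk : 0 < k) (h2 : 2 * k < d) :
    (k : ℝ) * Real.pi / d ∈ Set.Icc (-(Real.pi/2)) (Real.pi/2) := by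
  have hpi := Real.pi_pos
  have hd : (0:ℝ) < d := by exact_mod_cast (show 0 < d by omega)
  constructor
  · have : (0:ℝ) ≤ (k:ℝ) * Real.pi / d := by positivity
    linarith
  · rw [div_le_iff₀ hd]
    have h2' : (2:ℝ) * k ≤ d := by exact_mod_cast Nat.le_of_lt h2
    nlinarith

lemma angle_pos {k d : ℕ} (hk : 0 < k) (h2 : 2 * k < d) : 0 < (k : ℝ) * Real.pi / d := by
  have hpi := Real.pi_pos
  have hd : (0:ℝ) < d := by exact_mod_cast (show 0 < d by omega)
  have hk' : (0:ℝ) < k := by exact_mod_cast hk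
  positivity

lemma sv_pos {k d : ℕ} (hk : 0 < k) (h2 : 2 * k < d) : 0 < Real.sin ((k : ℝ) * Real.pi / d) := by
  have hpi := Real.pi_pos
  apply Real.sin_pos_of_pos_of_lt_pi (angle_pos hk h2)
  have := (angle_mem hk h2).2
  linarith

lemma angle_inj {k d k' d' : ℕ} (hk : 0 < k) (h2 : 2 * k < d) (hg : Nat.gcd k d = 1)
    (hk' : 0 < k') (h2' : 2 * k' < d') (hg' : Nat.gcd k' d' = 1)
    (h : Real.sin ((k:ℝ) * Real.pi / d) = Real.sin ((k':ℝ) * Real.pi / d')) :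
    k = k' ∧ d = d' := by
  have hd : 0 < d := by omega
  have hd' : 0 < d' := by omega
  have hpi := Real.pi_pos
  have heq := Real.strictMonoOn_sin.injOn (angle_mem hk h2) (angle_mem hk' h2') h
  have hd0 : (d:ℝ) ≠ 0 := Nat.cast_ne_zero.mpr (by omega)
  have hd0' : (d':ℝ) ≠ 0 := Nat.cast_ne_zero.mpr (by omega)
  have hkd : (k:ℝ) * d' = k' * d := by
    field_simp at heq
    linear_combination heq
  have hnat : k * d' = k' * d := by exact_mod_cast hkd
  have hco : Nat.Coprime d k := Nat.coprime_comm.mp hg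
  have hco' : Nat.Coprime d' k' := Nat.coprime_comm.mp hg'
  have hdd' : d ∣ d' := by
    apply hco.dvd_of_dvd_mul_left
    exact ⟨k', by rw [hnat]; exact Nat.mul_comm k' d⟩
  have hd'd : d' ∣ d := by
    apply hco'.dvd_of_dvd_mul_left
    exact ⟨k, by rw [← hnat]; exact Nat.mul_comm k d'⟩
  have hdeq : d = d' := Nat.dvd_antisymm hdd' hd'd
  subst hdeq
  exact ⟨Nat.eq_of_mul_eq_mul_right hd hnat, rfl⟩

lemma lucasPoly_root_sv (m d k q t : ℕ) (hmdq : m = d * q) (hmt : m = 2 * t + 1) (hd : 0 < d) :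
    ((lucasPoly m).map (Int.castRingHom ℝ)).IsRoot (2 * Real.sin ((k:ℝ) * Real.pi / d)) ∧
    ((lucasPoly m).map (Int.castRingHom ℝ)).IsRoot (-(2 * Real.sin ((k:ℝ) * Real.pi / d))) := by
  have hd0 : (d:ℝ) ≠ 0 := Nat.cast_ne_zero.mpr (by omega)
  have hmr : (m:ℝ) = (d:ℝ) * q := by exact_mod_cast congrArg (Nat.cast : ℕ → ℝ) hmdq
  have hmt' : (m:ℝ) = 2 * t + 1 := by exact_mod_cast congrArg (Nat.cast : ℕ → ℝ) hmt
  have hmk : (m:ℝ) * ((k:ℝ) * Real.pi / d) = (q:ℝ) * k * Real.pi := by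
    rw [hmr]; field_simp
  constructor
  · have hcos : 2 * Real.sin ((k:ℝ)*Real.pi/d) = 2 * Real.cos (Real.pi/2 - (k:ℝ)*Real.pi/d) := by
      rw [Real.cos_pi_div_two_sub]
    rw [IsRoot, hcos]
    apply lucasPoly_root m _ ((t:ℤ) - (q:ℤ) * k)
    push_cast
    rw [mul_sub, hmk, hmt']
    ring
  · have hcos : -(2 * Real.sin ((k:ℝ)*Real.pi/d)) = 2 * Real.cos ((k:ℝ)*Real.pi/d + Real.pi/2) := by
      rw [Real.cos_add_pi_div_two]; ring
    rw [IsRoot, hcos]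
    apply lucasPoly_root m _ ((t:ℤ) + (q:ℤ) * k)
    push_cast
    rw [mul_add, hmk, hmt']
    ring

lemma lucasPoly_root_zero (m t : ℕ) (hmt : m = 2 * t + 1) :
    ((lucasPoly m).map (Int.castRingHom ℝ)).IsRoot 0 := by
  have hmt' : (m:ℝ) = 2 * t + 1 := by exact_mod_cast congrArg (Nat.cast : ℕ → ℝ) hmt
  have h := lucasPoly_root m (Real.pi/2) (t:ℤ) (by push_cast; rw [hmt'])
  simpa using h


/-- Abbreviation for `2 sin(kπ/d)`. -/
noncomputable def svF (k d : ℕ) : ℝ := 2 * Real.sin ((k : ℝ) * Real.pi / d)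

/-- The index set `{k : 0 < k, 2k < d, gcd(k,d) = 1}`. -/
def sKF (d : ℕ) : Finset ℕ :=
  (Finset.range d).filter (fun k => 0 < k ∧ 2 * k < d ∧ Nat.gcd k d = 1)

lemma phiPoly_comp_sq {d : ℕ} (h3 : 3 ≤ d) :
    (phiPoly d).comp (X ^ 2) = ∏ k ∈ sKF d, ((X - C (svF k d)) * (X - C (-(svF k d)))) := by
  rw [phiPoly_of_three_le h3, prod_comp]
  simp only [sKF]
  apply Finset.prod_congr rfl
  intro k hk
  rw [sub_comp, X_comp, C_comp]
  simp only [svF]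
  rw [show (4:ℝ) * (Real.sin ((k:ℝ)*Real.pi/d))^2
      = (2*Real.sin ((k:ℝ)*Real.pi/d)) * (2*Real.sin ((k:ℝ)*Real.pi/d)) by ring, C_mul, map_neg]
  ring

/-- For odd `m ≥ 1`: `L m (x) = x · ∏_{d ∣ m, d > 1} φ_d(x²)` in `ℝ[X]`. -/
theorem lucas_odd_phi_factorization (m : ℕ) (hm : 1 ≤ m) (hodd : Odd m) :
    (lucasPoly m).map (Int.castRingHom ℝ) =
      X * ∏ d ∈ Finset.filter (fun d => 1 < d) (Nat.divisors m), (phiPoly d).comp (X ^ 2) := by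
  classical
  obtain ⟨t, ht⟩ := hodd
  set D : Finset ℕ := (Nat.divisors m).filter (fun d => 1 < d) with hD
  set M : Multiset ℝ :=
    0 ::ₘ D.val.bind (fun d => (sKF d).val.bind
      (fun k => ({svF k d, -(svF k d)} : Multiset ℝ))) with hM
  obtain ⟨n, hn⟩ : ∃ n, m = n + 1 := ⟨m - 1, by omega⟩
  have hmon : (lucasPoly m).Monic := by rw [hn]; exact (lucasPoly_monic_natDegree n).1
  have hdeg : (lucasPoly m).natDegree = m := by rw [hn]; exact (lucasPoly_monic_natDegree n).2
  have hLm_monic : ((lucasPoly m).map (Int.castRingHom ℝ)).Monic := hmon.map _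
  have hLm_deg : ((lucasPoly m).map (Int.castRingHom ℝ)).natDegree = m := by
    rw [hmon.natDegree_map]; exact hdeg
  have hDfact : ∀ d ∈ D, d ∣ m ∧ 3 ≤ d ∧ Odd d := by
    intro d hd
    rw [hD, Finset.mem_filter, Nat.mem_divisors] at hd
    obtain ⟨⟨hdvd, _⟩, h1⟩ := hd
    have hodd' : Odd d := by
      rcases Nat.even_or_odd d with he | ho
      · exfalso
        have h2 : 2 ∣ m := dvd_trans he.two_dvd hdvd
        omega
      · exact ho
    have h3 : 3 ≤ d := by rcases hodd' with ⟨j, hj⟩; omega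
    exact ⟨hdvd, h3, hodd'⟩
  have hKfact : ∀ d k, k ∈ sKF d → 0 < k ∧ 2 * k < d ∧ Nat.gcd k d = 1 := by
    intro d k hk
    simp only [sKF, Finset.mem_filter, Finset.mem_range] at hk
    exact hk.2
  have hsvF_pos : ∀ d k, k ∈ sKF d → 0 < svF k d := by
    intro d k hk
    obtain ⟨h1, h2, _⟩ := hKfact d k hk
    have := sv_pos h1 h2
    simp only [svF]; linarith
  have hsvF_inj : ∀ d k d' k', k ∈ sKF d → k' ∈ sKF d' → svF k d = svF k' d' →
      k = k' ∧ d = d' := by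
    intro d k d' k' hk hk' heq
    obtain ⟨h1, h2, h3⟩ := hKfact d k hk
    obtain ⟨h1', h2', h3'⟩ := hKfact d' k' hk'
    apply angle_inj h1 h2 h3 h1' h2' h3'
    simp only [svF] at heq; linarith
  have hmem_pair : ∀ d (a : ℝ),
      a ∈ (sKF d).val.bind (fun k => ({svF k d, -(svF k d)} : Multiset ℝ)) ↔
        ∃ k ∈ sKF d, a = svF k d ∨ a = -(svF k d) := by
    intro d a
    rw [Multiset.mem_bind]
    constructor
    · rintro ⟨k, hk, ha⟩
      simp only [Multiset.insert_eq_cons, Multiset.mem_cons, Multiset.mem_singleton] at ha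
      exact ⟨k, hk, ha⟩
    · rintro ⟨k, hk, ha⟩
      refine ⟨k, hk, ?_⟩
      simp only [Multiset.insert_eq_cons, Multiset.mem_cons, Multiset.mem_singleton]
      exact ha
  have hnodup : M.Nodup := by
    rw [hM, Multiset.nodup_cons]
    refine ⟨?_, ?_⟩
    · intro h0
      rw [Multiset.mem_bind] at h0
      obtain ⟨d, hd, h0⟩ := h0
      rw [hmem_pair] at h0
      obtain ⟨k, hk, h0⟩ := h0
      have := hsvF_pos d k hk
      rcases h0 with h | h <;> linarith [h]
    · rw [Multiset.nodup_bind]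
      refine ⟨?_, ?_⟩
      · intro d hd
        rw [Multiset.nodup_bind]
        refine ⟨?_, ?_⟩
        · intro k hk
          have := hsvF_pos d k hk
          simp only [Multiset.insert_eq_cons, Multiset.nodup_cons, Multiset.mem_singleton,
            Multiset.nodup_singleton, and_true]
          intro h; linarith
        · apply multiset_pairwise_of_nodup (sKF d).nodup
          intro k hk k' hk' hne
          have hp := hsvF_pos d k hk
          have hp' := hsvF_pos d k' hk'
          show Disjoint _ _
          rw [Multiset.disjoint_left]
          intro a ha ha'
          simp only [Multiset.insert_eq_cons, Multiset.mem_cons, Multiset.mem_singleton]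
            at ha ha'
          rcases ha with rfl | rfl <;> rcases ha' with h | h
          · exact hne (hsvF_inj d k d k' hk hk' h).1
          · linarith
          · linarith
          · exact hne (hsvF_inj d k d k' hk hk' (by linarith)).1
      · apply multiset_pairwise_of_nodup D.nodup
        intro d hd d' hd' hne
        show Disjoint _ _
        rw [Multiset.disjoint_left]
        intro a ha ha'
        rw [hmem_pair] at ha ha'
        obtain ⟨k, hk, ha⟩ := ha
        obtain ⟨k', hk', ha'⟩ := ha'
        have hp := hsvF_pos d k hk
        have hp' := hsvF_pos d' k' hk'
        rcases ha with rfl | rfl <;> rcases ha' with h | h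
        · exact hne (hsvF_inj d k d' k' hk hk' h).2
        · linarith
        · linarith
        · exact hne (hsvF_inj d k d' k' hk hk' (by linarith)).2
  have hroots : ∀ r ∈ M, ((lucasPoly m).map (Int.castRingHom ℝ)).IsRoot r := by
    intro r hr
    rw [hM, Multiset.mem_cons] at hr
    rcases hr with rfl | hr
    · exact lucasPoly_root_zero m t ht
    · rw [Multiset.mem_bind] at hr
      obtain ⟨d, hd, hr⟩ := hr
      rw [hmem_pair] at hr
      obtain ⟨k, hk, hr⟩ := hr
      obtain ⟨hdvd, hd3, _⟩ := hDfact d hd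
      have hmdq : m = d * (m / d) := (Nat.mul_div_cancel' hdvd).symm
      have hpair := lucasPoly_root_sv m d k (m / d) t hmdq ht (by omega)
      rcases hr with rfl | rfl
      · simpa [svF] using hpair.1
      · simpa [svF] using hpair.2
  have hLm_ne : ((lucasPoly m).map (Int.castRingHom ℝ)) ≠ 0 := hLm_monic.ne_zero
  have hle : M ≤ ((lucasPoly m).map (Int.castRingHom ℝ)).roots := by
    rw [Multiset.le_iff_count]
    intro r
    by_cases hr : r ∈ M
    · rw [Multiset.count_eq_one_of_mem hnodup hr, count_roots]
      exact (rootMultiplicity_pos hLm_ne).mpr (hroots r hr)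
    · rw [Multiset.count_eq_zero_of_notMem hr]
      exact Nat.zero_le _
  set P : Polynomial ℝ := (M.map fun r => X - C r).prod with hP
  have hP_monic : P.Monic := monic_multiset_prod_of_monic _ _ (fun r _ => monic_X_sub_C r)
  have hP_deg : P.natDegree = Multiset.card M := by
    rw [hP, natDegree_multiset_prod_of_monic _ (fun f hf => by
      obtain ⟨r, _, rfl⟩ := Multiset.mem_map.mp hf; exact monic_X_sub_C r)]
    rw [Multiset.map_map]
    simp [Function.comp, natDegree_X_sub_C]
  have hsumtot : ∑ d ∈ D, Nat.totient d = m - 1 := by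
    have h1 := Nat.sum_totient m
    have hsplit := Finset.sum_filter_add_sum_filter_not (Nat.divisors m)
      (fun d => 1 < d) Nat.totient
    rw [← hD] at hsplit
    have hnot : (Nat.divisors m).filter (fun d => ¬ 1 < d) = {1} := by
      ext d
      simp only [Finset.mem_filter, Nat.mem_divisors, Finset.mem_singleton, not_lt]
      constructor
      · rintro ⟨⟨hdvd, hm0⟩, hle⟩
        have := Nat.pos_of_dvd_of_pos hdvd (by omega)
        omega
      · rintro rfl
        exact ⟨⟨one_dvd m, by omega⟩, by omega⟩
    rw [hnot] at hsplit
    simp only [Finset.sum_singleton, Nat.totient_one] at hsplit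
    rw [h1] at hsplit
    omega
  have hcard : Multiset.card M = m := by
    rw [hM, Multiset.card_cons, Multiset.card_bind]
    have hmapc : (D.val.map (Multiset.card ∘ fun d => (sKF d).val.bind
        (fun k => ({svF k d, -(svF k d)} : Multiset ℝ)))) = D.val.map Nat.totient := by
      apply Multiset.map_congr rfl
      intro d hd
      simp only [Function.comp]
      rw [Multiset.card_bind]
      have hconst : ((sKF d).val.map (Multiset.card ∘ fun k =>
          ({svF k d, -(svF k d)} : Multiset ℝ))) = (sKF d).val.map (fun _ => 2) :=
        Multiset.map_congr rfl (fun k _ => rfl)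
      rw [hconst]
      have h2 : ((sKF d).val.map (fun _ => (2:ℕ))).sum = 2 * (sKF d).card := by
        rw [Multiset.map_const', Multiset.sum_replicate, smul_eq_mul, Finset.card_def]
        omega
      rw [h2]
      exact two_mul_card_eq_totient (hDfact d hd).2.1 (hDfact d hd).2.2
    rw [hmapc]
    have hms : (D.val.map Nat.totient).sum = ∑ d ∈ D, Nat.totient d := rfl
    rw [hms, hsumtot]
    omega
  have hPdvd : P ∣ (lucasPoly m).map (Int.castRingHom ℝ) :=
    (Multiset.prod_dvd_prod_of_le (Multiset.map_le_map hle)).trans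
      (prod_multiset_X_sub_C_dvd _)
  have hfinal : P = (lucasPoly m).map (Int.castRingHom ℝ) :=
    eq_of_dvd_of_natDegree_le_of_leadingCoeff hPdvd
      (by rw [hLm_deg, hP_deg, hcard])
      (by rw [hP_monic.leadingCoeff, hLm_monic.leadingCoeff])
  rw [← hfinal, hP, hM, Multiset.map_cons, Multiset.prod_cons, C_0, sub_zero]
  congr 1
  rw [Multiset.map_bind, Multiset.prod_bind, Finset.prod_eq_multiset_prod]
  apply congrArg Multiset.prod
  apply Multiset.map_congr rfl
  intro d hd
  obtain ⟨_, hd3, _⟩ := hDfact d hd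
  rw [Multiset.map_bind, Multiset.prod_bind, phiPoly_comp_sq hd3,
    Finset.prod_eq_multiset_prod]
  apply congrArg Multiset.prod
  apply Multiset.map_congr rfl
  intro k hk
  simp [Multiset.insert_eq_cons]
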